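/- Let f be a Boolean network of dimension n and F : M^n → {-1,0,1}^n a multivalued refinement of f, with M = {0,…,m}. For any asynchronous transition x →_F y of F and any most-permissive interpretation x̂ ∈ α(x), there exists ŷ ∈ α(y) reachable from x̂ under the most permissive semantics of f such that for every component i: ŷ_i = ↗ if y_i > x_i and y_i < m; ŷ_i = ↘ if y_i < x_i and y_i > 0; ŷ_i = 0 if y_i = 0; ŷ_i = 1 if y_i = m; and ŷ_i = x̂_i otherwise. -/

import Mathlib

inductive PState : Type
  | zero | up | down | one
deriving DecidableEq

def PState.ofBool : Bool → PState
  | false => .zero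
  | true  => .one

def PState.isBool (p : PState) : Prop := p = .zero ∨ p = .one

abbrev BN (n : ℕ) := (Fin n → Bool) → Fin n → Bool

def gamma {n : ℕ} (x : Fin n → PState) : Set (Fin n → Bool) :=
  {b | ∀ i (v : Bool), x i = PState.ofBool v → b i = v}

def mpStep {n : ℕ} (f : BN n) (x y : Fin n → PState) : Prop :=
  ∃ i : Fin n, x i ≠ y i ∧ (∀ j, j ≠ i → x j = y j) ∧
    ((y i = .up ∧ x i ≠ .one ∧ ∃ z ∈ gamma x, f z i = true) ∨
     (y i = .one ∧ x i = .up) ∨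
     (y i = .down ∧ x i ≠ .zero ∧ ∃ z ∈ gamma x, f z i = false) ∨
     (y i = .zero ∧ x i = .down))

def mpReachP {n : ℕ} (f : BN n) : (Fin n → PState) → (Fin n → PState) → Prop :=
  Relation.ReflTransGen (mpStep f)

def embed {n : ℕ} (x : Fin n → Bool) : Fin n → PState := fun i => PState.ofBool (x i)

def mpReach {n : ℕ} (f : BN n) (x : Fin n → Bool) : Set (Fin n → Bool) :=
  {y | mpReachP f (embed x) (embed y)}

def cubeSet {n : ℕ} (h : Fin n → Option Bool) : Set (Fin n → Bool) :=
  {z | ∀ i b, h i = some b → z i = b}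

def smaller {n : ℕ} (h h' : Fin n → Option Bool) : Prop :=
  ∀ i b, h' i = some b → h i = some b

def kClosed {n : ℕ} (f : BN n) (K : Finset (Fin n)) (h : Fin n → Option Bool) : Prop :=
  ∀ z ∈ cubeSet h, ∀ i ∈ K, h i = none ∨ h i = some (f z i)

def closedBy {n : ℕ} (f : BN n) (h : Fin n → Option Bool) : Prop :=
  ∀ z ∈ cubeSet h, f z ∈ cubeSet h

def smallestClosed {n : ℕ} (f : BN n) (x : Fin n → Bool) (h : Fin n → Option Bool) : Prop :=
  x ∈ cubeSet h ∧ closedBy f h ∧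
    ∀ h', x ∈ cubeSet h' → closedBy f h' → smaller h h'

def minClosed {n : ℕ} (f : BN n) (h : Fin n → Option Bool) : Prop :=
  closedBy f h ∧ ∀ h', closedBy f h' → smaller h' h → h' = h

def faStep {n : ℕ} (f : BN n) (x y : Fin n → Bool) : Prop :=
  ∃ i : Fin n, x i ≠ y i ∧ (∀ j, j ≠ i → x j = y j) ∧ y i = f x i

def aStep {n : ℕ} (f : BN n) (x y : Fin n → Bool) : Prop :=
  x ≠ y ∧ ∀ i, x i ≠ y i → y i = f x i

def mnStep {n m : ℕ} (F : (Fin n → Fin (m+1)) → Fin n → ℤ)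
    (x y : Fin n → Fin (m+1)) : Prop :=
  x ≠ y ∧ ∀ i, x i ≠ y i → ((y i : ℤ) = (x i : ℤ) + F x i)

def beta {n m : ℕ} (x : Fin n → Fin (m+1)) : Set (Fin n → Bool) :=
  {b | ∀ i, ((x i : ℕ) = 0 → b i = false) ∧ ((x i : ℕ) = m → b i = true)}

def refines {n m : ℕ} (F : (Fin n → Fin (m+1)) → Fin n → ℤ) (f : BN n) : Prop :=
  ∀ x i, (F x i > 0 → ∃ b ∈ beta x, f b i = true) ∧
         (F x i < 0 → ∃ b ∈ beta x, f b i = false)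

def alpha {n m : ℕ} (x : Fin n → Fin (m+1)) : Set (Fin n → PState) :=
  {p | ∀ i, ((x i : ℕ) = 0 ↔ p i = .zero) ∧ ((x i : ℕ) = m ↔ p i = .one)}

def bdStep {n : ℕ} (f : BN n) (L : Finset (Fin n)) (a b : Fin n → PState) : Prop :=
  mpStep f a b ∧ ∃ j, a j ≠ b j ∧ j ∉ L ∧ (a j).isBool ∧ ¬ (b j).isBool

def exhaustive {n : ℕ} (f : BN n) (x : Fin n → Bool) (L : Finset (Fin n))
    (zhat : Fin n → PState) : Prop :=
  Relation.ReflTransGen (bdStep f L) (embed x) zhat ∧ ∀ z', ¬ bdStep f L zhat z'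

lemma gamma_between {n : ℕ} (a b c : Fin n → PState)
    (hc : ∀ j, c j = a j ∨ c j = b j) {z : Fin n → Bool}
    (ha : z ∈ gamma a) (hb : z ∈ gamma b) : z ∈ gamma c := by
  intro j v hj
  rcases hc j with h | h
  · rw [h] at hj; exact ha j v hj
  · rw [h] at hj; exact hb j v hj

lemma reach_all {n : ℕ} (f : BN n) (a b : Fin n → PState)
    (H : ∀ i, a i ≠ b i →
      (b i = .up ∧ a i ≠ .one ∧ ∃ z, z ∈ gamma a ∧ z ∈ gamma b ∧ f z i = true) ∨
      (b i = .one ∧ a i = .up) ∨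
      (b i = .down ∧ a i ≠ .zero ∧ ∃ z, z ∈ gamma a ∧ z ∈ gamma b ∧ f z i = false) ∨
      (b i = .zero ∧ a i = .down)) :
    mpReachP f a b := by
  classical
  have key : ∀ S : Finset (Fin n),
      mpReachP f a (fun i => if i ∈ S then b i else a i) := by
    intro S
    induction S using Finset.induction_on with
    | empty => simp; exact Relation.ReflTransGen.refl
    | @insert j S hj ih =>
      by_cases hab : a j = b j
      · have heq : (fun i => if i ∈ insert j S then b i else a i)
            = (fun i => if i ∈ S then b i else a i) := by
          funext i
          by_cases hiS : i ∈ S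
          · simp [hiS]
          · by_cases hij : i = j
            · subst hij; simp [hiS, hab]
            · simp [hiS, hij]
        rw [heq]; exact ih
      · refine ih.tail ?_
        have hbet : ∀ k, (if k ∈ S then b k else a k) = a k ∨
            (if k ∈ S then b k else a k) = b k := by
          intro k; by_cases h : k ∈ S <;> simp [h]
        refine ⟨j, ?_, ?_, ?_⟩
        · simpa [hj] using hab
        · intro k hk
          simp [Finset.mem_insert, hk]
        · simp only [Finset.mem_insert, true_or, if_pos, hj, if_neg]
          rcases H j hab with ⟨h1, h2, z, hz1, hz2, hz3⟩ | ⟨h1, h2⟩ |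
              ⟨h1, h2, z, hz1, hz2, hz3⟩ | ⟨h1, h2⟩
          · exact Or.inl ⟨h1, h2, z, gamma_between a b _ hbet hz1 hz2, hz3⟩
          · exact Or.inr (Or.inl ⟨h1, h2⟩)
          · exact Or.inr (Or.inr (Or.inl ⟨h1, h2, z,
              gamma_between a b _ hbet hz1 hz2, hz3⟩))
          · exact Or.inr (Or.inr (Or.inr ⟨h1, h2⟩))
  have := key Finset.univ
  simpa using this

theorem stmt5 {n m : ℕ} (f : BN n) (F : (Fin n → Fin (m+1)) → Fin n → ℤ)
    (hF : ∀ x i, F x i = -1 ∨ F x i = 0 ∨ F x i = 1)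
    (href : refines F f)
    (x y : Fin n → Fin (m+1)) (hxy : mnStep F x y)
    (xh : Fin n → PState) (hx : xh ∈ alpha x) :
    ∃ yh ∈ alpha y, mpReachP f xh yh ∧ ∀ i : Fin n,
      yh i = if (x i : ℕ) < (y i : ℕ) ∧ (y i : ℕ) < m then PState.up
        else if (y i : ℕ) < (x i : ℕ) ∧ 0 < (y i : ℕ) then PState.down
        else if (y i : ℕ) = 0 then PState.zero
        else if (y i : ℕ) = m then PState.one
        else xh i := by
  classical
  obtain ⟨hne, hstep⟩ := hxy
  have hm : 0 < m := by
    by_contra h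
    apply hne
    funext i
    have h1 := (x i).isLt
    have h2 := (y i).isLt
    exact Fin.ext (by omega)
  obtain ⟨p, hp⟩ : ∃ p : Fin n → PState, ∀ i, p i =
      if (x i : ℕ) < (y i : ℕ) then PState.up
      else if (y i : ℕ) < (x i : ℕ) then PState.down else xh i :=
    ⟨_, fun _ => rfl⟩
  obtain ⟨yh, hyh⟩ : ∃ yh : Fin n → PState, ∀ i, yh i =
      if (x i : ℕ) < (y i : ℕ) ∧ (y i : ℕ) < m then PState.up
        else if (y i : ℕ) < (x i : ℕ) ∧ 0 < (y i : ℕ) then PState.down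
        else if (y i : ℕ) = 0 then PState.zero
        else if (y i : ℕ) = m then PState.one
        else xh i := ⟨_, fun _ => rfl⟩
  -- basic facts
  have hvne : ∀ i : Fin n, (x i : ℕ) ≠ (y i : ℕ) → x i ≠ y i := by
    intro i h he; exact h (by rw [he])
  have hFpos : ∀ i, (x i : ℕ) < (y i : ℕ) → 0 < F x i := by
    intro i h
    have heq := hstep i (hvne i (by omega))
    omega
  have hFneg : ∀ i, (y i : ℕ) < (x i : ℕ) → F x i < 0 := by
    intro i h
    have heq := hstep i (hvne i (by omega))
    omega
  have hbg : ∀ b ∈ beta x, b ∈ gamma xh := by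
    intro b hb j v hv
    cases v with
    | false =>
      have hz : xh j = PState.zero := hv
      exact (hb j).1 ((hx j).1.mpr hz)
    | true =>
      have hz : xh j = PState.one := hv
      exact (hb j).2 ((hx j).2.mpr hz)
  have hbgp : ∀ b ∈ beta x, b ∈ gamma p := by
    intro b hb j v hv
    rw [hp j] at hv
    by_cases h1 : (x j : ℕ) < (y j : ℕ)
    · rw [if_pos h1] at hv; cases v <;> simp [PState.ofBool] at hv
    · rw [if_neg h1] at hv
      by_cases h2 : (y j : ℕ) < (x j : ℕ)
      · rw [if_pos h2] at hv; cases v <;> simp [PState.ofBool] at hv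
      · rw [if_neg h2] at hv
        exact hbg b hb j v hv
  have phase1 : mpReachP f xh p := by
    apply reach_all
    intro i hne'
    rw [hp i] at hne' ⊢
    by_cases h1 : (x i : ℕ) < (y i : ℕ)
    · rw [if_pos h1]
      left
      refine ⟨rfl, ?_, ?_⟩
      · intro hone
        have := (hx i).2.mpr hone
        have := (y i).isLt
        omega
      · obtain ⟨b, hb, hfb⟩ := (href x i).1 (hFpos i h1)
        exact ⟨b, hbg b hb, hbgp b hb, hfb⟩
    · rw [if_neg h1] at hne' ⊢
      by_cases h2 : (y i : ℕ) < (x i : ℕ)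
      · rw [if_pos h2]
        right; right; left
        refine ⟨rfl, ?_, ?_⟩
        · intro hzero
          have := (hx i).1.mpr hzero
          omega
        · obtain ⟨b, hb, hfb⟩ := (href x i).2 (hFneg i h2)
          exact ⟨b, hbg b hb, hbgp b hb, hfb⟩
      · rw [if_neg h2] at hne' ⊢
        exact absurd rfl hne'
  have phase2 : mpReachP f p yh := by
    apply reach_all
    intro i hne'
    rw [hp i, hyh i] at hne' ⊢
    have hylt := (y i).isLt
    have hxlt := (x i).isLt
    by_cases h1 : (x i : ℕ) < (y i : ℕ)
    · rw [if_pos h1] at hne' ⊢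
      have hym : (y i : ℕ) = m := by
        by_contra hym
        exact hne' (by rw [if_pos ⟨h1, by omega⟩])
      right; left
      constructor
      · rw [if_neg (by omega), if_neg (by omega), if_neg (by omega), if_pos hym]
      · rfl
    · rw [if_neg h1] at hne' ⊢
      by_cases h2 : (y i : ℕ) < (x i : ℕ)
      · rw [if_pos h2] at hne' ⊢
        have hy0 : (y i : ℕ) = 0 := by
          by_contra hy0
          exact hne' (by rw [if_neg (by omega), if_pos ⟨h2, by omega⟩])
        right; right; right
        constructor
        · rw [if_neg (by omega), if_neg (by omega), if_pos hy0]
        · rfl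
      · rw [if_neg h2] at hne' ⊢
        exfalso
        apply hne'
        rw [if_neg (by omega), if_neg (by omega)]
        by_cases hy0 : (y i : ℕ) = 0
        · rw [if_pos hy0]
          exact (hx i).1.mp (by omega)
        · rw [if_neg hy0]
          by_cases hym : (y i : ℕ) = m
          · rw [if_pos hym]
            exact (hx i).2.mp (by omega)
          · rw [if_neg hym]
  have hyalpha : yh ∈ alpha y := by
    intro i
    rw [hyh i]
    have hylt := (y i).isLt
    have hxlt := (x i).isLt
    split_ifs with c1 c2 c3 c4
    · constructor
      · constructor
        · intro h; omega
        · intro h; exact absurd h (by simp)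
      · constructor
        · intro h; omega
        · intro h; exact absurd h (by simp)
    · constructor
      · constructor
        · intro h; omega
        · intro h; exact absurd h (by simp)
      · constructor
        · intro h; omega
        · intro h; exact absurd h (by simp)
    · constructor
      · exact ⟨fun _ => rfl, fun _ => c3⟩
      · constructor
        · intro h; omega
        · intro h; exact absurd h (by simp)
    · constructor
      · constructor
        · intro h; omega
        · intro h; exact absurd h (by simp)
      · exact ⟨fun _ => rfl, fun _ => c4⟩
    · have hxy' : (x i : ℕ) = (y i : ℕ) := by omega
      rw [← hxy']
      exact hx i
  exact ⟨yh, hyalpha, phase1.trans phase2, hyh⟩
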